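/- arXiv:1905.13588 — 2 statements merged into one kernel-verified Lean document; each statement's English description precedes it below -/
import Mathlib

section
/- For all n ≥ 6 divisible by 6, the graph Γ_n(∅, ∅, {0, n/6, n/2, 5n/6}) is isomorphic to Γ_n(∅, ∅, {0, n/3, n/2, 2n/3}) via the map v_i ↦ v_i, v'_i ↦ v'_{i+n/2}, and hence is non-planar. -/
/-- The circulant graph `circ_n(S)`: vertices `ZMod n`, with `i` adjacent to `i + s` for `s ∈ S`. -/
def circGraph (n : ℕ) (S : Finset ℕ) : SimpleGraph (ZMod n) :=
  SimpleGraph.fromRel (fun i j => ∃ s ∈ S, j = i + (s : ZMod n))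

/-- The graph `Γ_n(A,B,Q)` with vertices `v_i = Sum.inl i`, `v'_i = Sum.inr i`, and edges
`(v_i, v_{i+a})` for `a ∈ A`, `(v'_i, v'_{i+b})` for `b ∈ B`, `(v_i, v'_{i+q})` for `q ∈ Q`. -/
def Gamma (n : ℕ) (A B Q : Finset ℕ) : SimpleGraph (ZMod n ⊕ ZMod n) :=
  SimpleGraph.fromRel (fun x y =>
    match x, y with
    | Sum.inl i, Sum.inl j => ∃ a ∈ A, j = i + (a : ZMod n)
    | Sum.inr i, Sum.inr j => ∃ b ∈ B, j = i + (b : ZMod n)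
    | Sum.inl i, Sum.inr j => ∃ q ∈ Q, j = i + (q : ZMod n)
    | Sum.inr _, Sum.inl _ => False)

/-- `H` is a minor of `G`: there are disjoint connected branch sets in `G`, one for each
vertex of `H`, such that adjacent vertices of `H` have adjacent branch sets. -/
def SimpleGraph.IsMinorOf {W V : Type*} (H : SimpleGraph W) (G : SimpleGraph V) : Prop :=
  ∃ f : V → Option W,
    (∀ w : W, (G.induce {v | f v = some w}).Connected) ∧
    (∀ w₁ w₂ : W, H.Adj w₁ w₂ →
      ∃ v₁ v₂, f v₁ = some w₁ ∧ f v₂ = some w₂ ∧ G.Adj v₁ v₂)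

/-- A graph is planar iff it has no `K₅` minor and no `K_{3,3}` minor (Wagner's theorem). -/
def SimpleGraph.Planar {V : Type*} (G : SimpleGraph V) : Prop :=
  ¬ (⊤ : SimpleGraph (Fin 5)).IsMinorOf G ∧
  ¬ (completeBipartiteGraph (Fin 3) (Fin 3)).IsMinorOf G

/-- `Γ_n(A,B,Q)` is properly given: `a₁ ≢ ±a₂ (mod n)` for distinct `a₁, a₂ ∈ A`,
and similarly for `B`. -/
def ProperlyGiven (n : ℕ) (A B : Finset ℕ) : Prop :=
  (∀ a₁ ∈ A, ∀ a₂ ∈ A, a₁ ≠ a₂ →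
    (a₁ : ZMod n) ≠ (a₂ : ZMod n) ∧ (a₁ : ZMod n) ≠ -(a₂ : ZMod n)) ∧
  (∀ b₁ ∈ B, ∀ b₂ ∈ B, b₁ ≠ b₂ →
    (b₁ : ZMod n) ≠ (b₂ : ZMod n) ∧ (b₁ : ZMod n) ≠ -(b₂ : ZMod n))

/-- `circ_n(S)` is properly given: `s ≢ ±t (mod n)` for distinct `s, t ∈ S`. -/
def ProperlyGivenS (n : ℕ) (S : Finset ℕ) : Prop :=
  ∀ s ∈ S, ∀ t ∈ S, s ≠ t →
    (s : ZMod n) ≠ (t : ZMod n) ∧ (s : ZMod n) ≠ -(t : ZMod n)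

/-- A permutation is regular of order `n`: all its cycles have length exactly `n`
(for `n = 1` this means the identity). -/
def IsRegularOfOrder {α : Type*} (f : Equiv.Perm α) (n : ℕ) : Prop :=
  f ^ n = 1 ∧ ∀ x : α, ∀ k : ℕ, 0 < k → k < n → (f ^ k) x ≠ x

lemma connected_singleton' {V : Type*} (G : SimpleGraph V) (v : V) :
    (G.induce {w | w = v}).Connected := by
  haveI : Nonempty ({w | w = v} : Set V) := ⟨⟨v, rfl⟩⟩
  refine ⟨fun x y => ?_⟩
  have : x = y := Subtype.ext (x.2.trans y.2.symm)
  exact this ▸ SimpleGraph.Reachable.refl x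

lemma minor_of_embedding' {W V : Type*} (H : SimpleGraph W) (G : SimpleGraph V)
    (g : W → V) (hg : Function.Injective g)
    (hadj : ∀ w1 w2, H.Adj w1 w2 → G.Adj (g w1) (g w2)) : H.IsMinorOf G := by
  classical
  refine ⟨fun v => if h : ∃ w, g w = v then some h.choose else none, ?_, ?_⟩
  · intro w
    have hset : {v | (if h : ∃ w', g w' = v then some h.choose else none) = some w}
        = {v | v = g w} := by
      ext v
      simp only [Set.mem_setOf_eq]
      constructor
      · intro hv
        split at hv
        · next h => exact (Option.some_inj.mp hv ▸ h.choose_spec).symm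
        · simp at hv
      · rintro rfl
        have h : ∃ w', g w' = g w := ⟨w, rfl⟩
        rw [dif_pos h, Option.some_inj]
        exact hg h.choose_spec
    rw [hset]
    exact connected_singleton' G (g w)
  · intro w1 w2 h
    have key : ∀ w : W, (if h : ∃ w', g w' = g w then some h.choose else none) = some w := by
      intro w
      have h : ∃ w', g w' = g w := ⟨w, rfl⟩
      rw [dif_pos h, Option.some_inj]
      exact hg h.choose_spec
    exact ⟨g w1, g w2, key w1, key w2, hadj _ _ h⟩

theorem stmt11 (n : ℕ) (hn : 6 ≤ n) (h6 : 6 ∣ n) :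
    (∃ e : Gamma n ∅ ∅ {0, n / 6, n / 2, 5 * n / 6} ≃g Gamma n ∅ ∅ {0, n / 3, n / 2, 2 * n / 3},
      (∀ i : ZMod n, e (Sum.inl i) = Sum.inl i) ∧
      (∀ i : ZMod n, e (Sum.inr i) = Sum.inr (i + ((n / 2 : ℕ) : ZMod n)))) ∧
    ¬ (Gamma n ∅ ∅ {0, n / 6, n / 2, 5 * n / 6}).Planar := by
  obtain ⟨m, rfl⟩ := h6
  have hm : 1 ≤ m := by omega
  haveI : NeZero (6 * m) := ⟨by omega⟩
  have hd1 : 6 * m / 6 = m := by omega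
  have hd2 : 6 * m / 2 = 3 * m := by omega
  have hd3 : 5 * (6 * m) / 6 = 5 * m := by omega
  have hd4 : 6 * m / 3 = 2 * m := by omega
  have hd5 : 2 * (6 * m) / 3 = 4 * m := by omega
  rw [hd1, hd2, hd3, hd4, hd5]
  have hz : ((6 * m : ℕ) : ZMod (6 * m)) = 0 := ZMod.natCast_self _
  push_cast at hz
  constructor
  · refine ⟨⟨Equiv.sumCongr (Equiv.refl _) (Equiv.addRight (((3 * m : ℕ)) : ZMod (6 * m))), ?_⟩,
      fun i => rfl, fun i => rfl⟩
    rintro (i | i) (j | j) <;>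
      simp only [Equiv.sumCongr_apply, Sum.map_inl, Sum.map_inr, Equiv.coe_refl, id_eq,
        Equiv.coe_addRight, Gamma, SimpleGraph.fromRel_adj, Finset.mem_insert,
        Finset.mem_singleton, Finset.notMem_empty, false_and, exists_false, or_self,
        ne_eq, reduceCtorEq, not_false_eq_true, true_and, and_false, iff_self, or_false,
        false_or, exists_eq_or_imp, exists_eq_left, and_true]
    · push_cast
      constructor
      · rintro (h | h | h | h)
        · right; right; left; linear_combination h - hz
        · right; right; right; linear_combination h - hz
        · left; linear_combination h
        · right; left; linear_combination h
      · rintro (h | h | h | h)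
        · right; right; left; linear_combination h
        · right; right; right; linear_combination h
        · left; linear_combination h + hz
        · right; left; linear_combination h + hz
    · push_cast
      constructor
      · rintro (h | h | h | h)
        · right; right; left; linear_combination h - hz
        · right; right; right; linear_combination h - hz
        · left; linear_combination h
        · right; left; linear_combination h
      · rintro (h | h | h | h)
        · right; right; left; linear_combination h
        · right; right; right; linear_combination h
        · left; linear_combination h + hz
        · right; left; linear_combination h + hz
  · rintro ⟨-, h33⟩
    apply h33
    have castinj : ∀ a b : ℕ, a < 6 * m → b < 6 * m →
        ((a : ZMod (6 * m)) = (b : ZMod (6 * m))) → a = b := by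
      intro a b ha hb h
      have := congrArg ZMod.val h
      rwa [ZMod.val_cast_of_lt ha, ZMod.val_cast_of_lt hb] at this
    refine minor_of_embedding' _ _
      (fun w => match w with
        | Sum.inl a => Sum.inl (((2 * a.val * m : ℕ) : ZMod (6 * m)))
        | Sum.inr b => Sum.inr ((((2 * b.val + 1) * m : ℕ) : ZMod (6 * m)))) ?_ ?_
    · rintro (a1 | b1) (a2 | b2) h
      · simp only [Sum.inl.injEq] at h
        have hb1 : 2 * a1.val * m < 6 * m := by
          have h3 := a1.isLt
          calc 2 * a1.val * m ≤ 2 * 2 * m := Nat.mul_le_mul_right m (by omega)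
          _ < 6 * m := by omega
        have hb2 : 2 * a2.val * m < 6 * m := by
          have h3 := a2.isLt
          calc 2 * a2.val * m ≤ 2 * 2 * m := Nat.mul_le_mul_right m (by omega)
          _ < 6 * m := by omega
        have heq := castinj _ _ hb1 hb2 h
        have := Nat.eq_of_mul_eq_mul_right (by omega : 0 < m) heq
        exact congrArg Sum.inl (Fin.ext (by omega))
      · exact absurd h (by simp)
      · exact absurd h (by simp)
      · simp only [Sum.inr.injEq] at h
        have hb1 : (2 * b1.val + 1) * m < 6 * m := by
          have h3 := b1.isLt
          calc (2 * b1.val + 1) * m ≤ 5 * m := Nat.mul_le_mul_right m (by omega)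
          _ < 6 * m := by omega
        have hb2 : (2 * b2.val + 1) * m < 6 * m := by
          have h3 := b2.isLt
          calc (2 * b2.val + 1) * m ≤ 5 * m := Nat.mul_le_mul_right m (by omega)
          _ < 6 * m := by omega
        have heq := castinj _ _ hb1 hb2 h
        have := Nat.eq_of_mul_eq_mul_right (by omega : 0 < m) heq
        exact congrArg Sum.inr (Fin.ext (by omega))
    · rintro (a | b) (a' | b') h <;>
        simp only [completeBipartiteGraph_adj, Sum.isLeft_inl, Sum.isRight_inl,
          Sum.isLeft_inr, Sum.isRight_inr, and_false, false_and, and_true, true_and,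
          or_self, or_false, false_or] at h
      · exact absurd h (by simp)
      · -- inl a, inr b'
        simp only [Gamma, SimpleGraph.fromRel_adj]
        refine ⟨by simp, Or.inl ?_⟩
        fin_cases a <;> fin_cases b'
        · exact ⟨m, by simp, by push_cast; ring⟩
        · exact ⟨3 * m, by simp, by push_cast; ring⟩
        · exact ⟨5 * m, by simp, by push_cast; ring⟩
        · exact ⟨5 * m, by simp, by push_cast; linear_combination -hz⟩
        · exact ⟨m, by simp, by push_cast; ring⟩
        · exact ⟨3 * m, by simp, by push_cast; ring⟩
        · exact ⟨3 * m, by simp, by push_cast; linear_combination -hz⟩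
        · exact ⟨5 * m, by simp, by push_cast; linear_combination -hz⟩
        · exact ⟨m, by simp, by push_cast; ring⟩
      · -- inr b, inl a'
        simp only [Gamma, SimpleGraph.fromRel_adj]
        refine ⟨by simp, Or.inr ?_⟩
        fin_cases a' <;> fin_cases b
        · exact ⟨m, by simp, by push_cast; ring⟩
        · exact ⟨3 * m, by simp, by push_cast; ring⟩
        · exact ⟨5 * m, by simp, by push_cast; ring⟩
        · exact ⟨5 * m, by simp, by push_cast; linear_combination -hz⟩
        · exact ⟨m, by simp, by push_cast; ring⟩
        · exact ⟨3 * m, by simp, by push_cast; ring⟩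
        · exact ⟨3 * m, by simp, by push_cast; linear_combination -hz⟩
        · exact ⟨5 * m, by simp, by push_cast; linear_combination -hz⟩
        · exact ⟨m, by simp, by push_cast; ring⟩
      · exact absurd h (by simp)
end

section
/- Let n ≥ 2 be even, with gcd(n,s) = 1, and let q ∈ {0,…,n−1}. Then Γ_n({s}, {s}, {q}) is isomorphic to Γ_n(∅, ∅, {q, q+s, q−s}). -/
theorem stmt16 (n : ℕ) (hn : 2 ≤ n) (he : Even n) (s q : ℕ)
    (hs : Nat.gcd n s = 1) (hsn : s < n) (hq : q < n) :
    Nonempty (Gamma n {s} {s} {q} ≃g Gamma n ∅ ∅ {q, q + s, q + n - s}) := by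
  haveI : NeZero n := ⟨by omega⟩
  haveI : Fact (1 < n) := ⟨by omega⟩
  have h2 : (2:ℕ) ∣ n := he.two_dvd
  have hu : IsUnit (s : ZMod n) := (ZMod.isUnit_iff_coprime s n).mpr (Nat.coprime_comm.mp hs)
  have hts : (s : ZMod n)⁻¹ * s = 1 := ZMod.inv_mul_of_unit _ hu
  have hs0 : (s : ZMod n) ≠ 0 := hu.ne_zero
  have hq2 : ((q + n - s : ℕ) : ZMod n) = (q : ZMod n) - (s : ZMod n) := by
    have h1 : q + n - s = q + (n - s) := by omega
    rw [h1, Nat.cast_add, Nat.cast_sub hsn.le, ZMod.natCast_self]; ring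
  -- parity function
  set e : ZMod n → ZMod 2 := fun i => ZMod.castHom h2 (ZMod 2) ((s : ZMod n)⁻¹ * i) with he'
  have hadd : ∀ i j : ZMod n, e (i + j) = e i + e j := by
    intro i j; simp only [he', mul_add, map_add]
  have heS : e (s : ZMod n) = 1 := by
    simp only [he', hts, map_one]
  have hes : ∀ i : ZMod n, e (i + s) = e i + 1 := by
    intro i; rw [hadd, heS]
  have hes' : ∀ i : ZMod n, e (i - s) = e i + 1 := by
    intro i
    have := hes (i - s)
    rw [sub_add_cancel] at this
    have h11 : ∀ a b : ZMod 2, a = b + 1 → b = a + 1 := by decide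
    exact h11 _ _ this
  have hone : ∀ x : ZMod 2, ¬ x = 0 → x = 1 := by decide
  have hone' : ∀ x : ZMod 2, ¬ x + 1 = 0 → x = 0 := by decide
  classical
  -- the map
  set f : ZMod n ⊕ ZMod n → ZMod n ⊕ ZMod n := fun x =>
    match x with
    | .inl i => if e i = 0 then .inl i else .inr (i + q)
    | .inr j => if e (j - q) = 0 then .inr j else .inl (j - q) with hf
  have hff : ∀ x, f (f x) = x := by
    rintro (i | j)
    · by_cases h : e i = 0
      · simp [hf, h]
      · simp [hf, h, add_sub_cancel_right]
    · by_cases h : e (j - q) = 0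
      · simp [hf, h]
      · simp [hf, h, sub_add_cancel]
  -- adjacency characterizations
  have adj1 : ∀ x y, (Gamma n {s} {s} {q}).Adj x y ↔ x ≠ y ∧
      (match x, y with
       | Sum.inl i, Sum.inl j => j = i + s ∨ i = j + s
       | Sum.inr i, Sum.inr j => j = i + s ∨ i = j + s
       | Sum.inl i, Sum.inr j => j = i + q
       | Sum.inr i, Sum.inl j => i = j + q) := by
    rintro (i | i) (j | j) <;>
      simp [Gamma, SimpleGraph.fromRel_adj, eq_comm, and_comm, or_comm]
  have adj2 : ∀ x y, (Gamma n ∅ ∅ {q, q + s, q + n - s}).Adj x y ↔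
      (match x, y with
       | Sum.inl _, Sum.inl _ => False
       | Sum.inr _, Sum.inr _ => False
       | Sum.inl i, Sum.inr j => j = i + q ∨ j = i + q + s ∨ j = i + q - s
       | Sum.inr i, Sum.inl j => i = j + q ∨ i = j + q + s ∨ i = j + q - s) := by
    rintro (i | i) (j | j) <;>
      simp [Gamma, SimpleGraph.fromRel_adj, hq2, Nat.cast_add, add_assoc, sub_eq_add_neg]
  have h110 : (1 : ZMod 2) + 1 = 0 := by decide
  have hesd : ∀ i : ZMod n, e (i + s - q) = e (i - q) + 1 := by
    intro i; rw [show ∀ i : ZMod n, i + s - q = (i - q) + s from fun i => by ring, hes]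
  have key1 : ∀ x y, (Gamma n {s} {s} {q}).Adj x y →
      (Gamma n ∅ ∅ {q, q + s, q + n - s}).Adj (f x) (f y) := by
    rintro (i | i) (j | j) h <;> rw [adj1] at h <;> obtain ⟨hne, h⟩ := h
    · rcases h with h | h <;> subst h
      · by_cases hp : e i = 0
        · simp only [hf, hes, hp, zero_add, one_ne_zero, if_true, if_false, ite_true, ite_false]
          rw [adj2]; exact Or.inr (Or.inl (by ring))
        · simp only [hf, hes, hone _ hp, h110, hp, if_true, if_false, ite_true, ite_false]
          rw [adj2]; exact Or.inr (Or.inr (by ring))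
      · by_cases hp : e j = 0
        · simp only [hf, hes, hp, zero_add, one_ne_zero, if_true, if_false, ite_true, ite_false]
          rw [adj2]; exact Or.inr (Or.inl (by ring))
        · simp only [hf, hes, hone _ hp, h110, hp, if_true, if_false, ite_true, ite_false]
          rw [adj2]; exact Or.inr (Or.inr (by ring))
    · subst h
      by_cases hp : e i = 0 <;>
        simp only [hf, add_sub_cancel_right, hp, if_true, if_false, ite_true, ite_false,
          one_ne_zero] <;> rw [adj2]
      · exact Or.inl rfl
      · exact Or.inl (by ring)
    · subst h
      by_cases hp : e j = 0 <;>
        simp only [hf, add_sub_cancel_right, hp, if_true, if_false, ite_true, ite_false,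
          one_ne_zero] <;> rw [adj2]
      · exact Or.inl rfl
      · exact Or.inl (by ring)
    · rcases h with h | h <;> subst h
      · by_cases hp : e (i - q) = 0
        · simp only [hf, hesd, hp, zero_add, one_ne_zero, if_true, if_false, ite_true, ite_false]
          rw [adj2]; exact Or.inr (Or.inr (by ring))
        · simp only [hf, hesd, hone _ hp, h110, hp, if_true, if_false, ite_true, ite_false]
          rw [adj2]; exact Or.inr (Or.inl (by ring))
      · by_cases hp : e (j - q) = 0
        · simp only [hf, hesd, hp, zero_add, one_ne_zero, if_true, if_false, ite_true, ite_false]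
          rw [adj2]; exact Or.inr (Or.inr (by ring))
        · simp only [hf, hesd, hone _ hp, h110, hp, if_true, if_false, ite_true, ite_false]
          rw [adj2]; exact Or.inr (Or.inl (by ring))
  have hesd' : ∀ i : ZMod n, e (i - s - q) = e (i - q) + 1 := by
    intro i; rw [show ∀ i : ZMod n, i - s - q = (i - q) - s from fun i => by ring, hes']
  have key2 : ∀ x y, (Gamma n ∅ ∅ {q, q + s, q + n - s}).Adj x y →
      (Gamma n {s} {s} {q}).Adj (f x) (f y) := by
    rintro (i | i) (j | j) h <;> rw [adj2] at h
    · exact h.elim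
    · rcases h with h | h | h <;> subst h
      · by_cases hp : e i = 0 <;>
          simp only [hf, add_sub_cancel_right, hp, one_ne_zero, if_true, if_false,
            ite_true, ite_false] <;> rw [adj1]
        · exact ⟨by simp, rfl⟩
        · exact ⟨by simp, by ring⟩
      · by_cases hp : e i = 0
        · simp only [hf, hesd, add_sub_cancel_right, hp, zero_add, one_ne_zero,
            if_true, if_false, ite_true, ite_false]
          rw [adj1]
          refine ⟨?_, Or.inl (by ring)⟩
          intro hc
          rw [Sum.inl.injEq] at hc
          first
          | exact hs0 (by linear_combination hc)
          | exact hs0 (by linear_combination -hc)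
        · simp only [hf, hesd, add_sub_cancel_right, hone _ hp, h110, hp, one_ne_zero,
            if_true, if_false, ite_true, ite_false]
          rw [adj1]
          refine ⟨?_, Or.inl (by ring)⟩
          intro hc
          rw [Sum.inr.injEq] at hc
          first
          | exact hs0 (by linear_combination hc)
          | exact hs0 (by linear_combination -hc)
      · by_cases hp : e i = 0
        · simp only [hf, hesd', add_sub_cancel_right, hp, zero_add, one_ne_zero,
            if_true, if_false, ite_true, ite_false]
          rw [adj1]
          refine ⟨?_, Or.inr (by ring)⟩
          intro hc
          rw [Sum.inl.injEq] at hc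
          first
          | exact hs0 (by linear_combination hc)
          | exact hs0 (by linear_combination -hc)
        · simp only [hf, hesd', add_sub_cancel_right, hone _ hp, h110, hp, one_ne_zero,
            if_true, if_false, ite_true, ite_false]
          rw [adj1]
          refine ⟨?_, Or.inr (by ring)⟩
          intro hc
          rw [Sum.inr.injEq] at hc
          first
          | exact hs0 (by linear_combination hc)
          | exact hs0 (by linear_combination -hc)
    · rcases h with h | h | h <;> subst h
      · by_cases hp : e j = 0 <;>
          simp only [hf, add_sub_cancel_right, hp, one_ne_zero, if_true, if_false,
            ite_true, ite_false] <;> rw [adj1]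
        · exact ⟨by simp, rfl⟩
        · exact ⟨by simp, by ring⟩
      · by_cases hp : e j = 0
        · simp only [hf, hesd, add_sub_cancel_right, hp, zero_add, one_ne_zero,
            if_true, if_false, ite_true, ite_false]
          rw [adj1]
          refine ⟨?_, Or.inr (by ring)⟩
          intro hc
          rw [Sum.inl.injEq] at hc
          first
          | exact hs0 (by linear_combination hc)
          | exact hs0 (by linear_combination -hc)
        · simp only [hf, hesd, add_sub_cancel_right, hone _ hp, h110, hp, one_ne_zero,
            if_true, if_false, ite_true, ite_false]
          rw [adj1]
          refine ⟨?_, Or.inr (by ring)⟩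
          intro hc
          rw [Sum.inr.injEq] at hc
          first
          | exact hs0 (by linear_combination hc)
          | exact hs0 (by linear_combination -hc)
      · by_cases hp : e j = 0
        · simp only [hf, hesd', add_sub_cancel_right, hp, zero_add, one_ne_zero,
            if_true, if_false, ite_true, ite_false]
          rw [adj1]
          refine ⟨?_, Or.inl (by ring)⟩
          intro hc
          rw [Sum.inl.injEq] at hc
          first
          | exact hs0 (by linear_combination hc)
          | exact hs0 (by linear_combination -hc)
        · simp only [hf, hesd', add_sub_cancel_right, hone _ hp, h110, hp, one_ne_zero,
            if_true, if_false, ite_true, ite_false]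
          rw [adj1]
          refine ⟨?_, Or.inl (by ring)⟩
          intro hc
          rw [Sum.inr.injEq] at hc
          first
          | exact hs0 (by linear_combination hc)
          | exact hs0 (by linear_combination -hc)
    · exact h.elim
  refine ⟨⟨⟨f, f, hff, hff⟩, ?_⟩⟩
  intro a b
  simp only [Equiv.coe_fn_mk]
  constructor
  · intro h
    have h2' := key2 _ _ h
    rwa [hff, hff] at h2'
  · exact key1 _ _
end
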